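/- With the setup of the previous statement (leaf l occurring exactly once, eval affine in t with slope a), the sum of the subnetwork terms of S that contain leaf l, evaluated with leaf l having value t, equals a * t, i.e. equals (∂S/∂S_l) * S_l. -/
import Mathlib


/-- Sum-product expressions with indexed leaves. -/
inductive SPN (ι : Type) : Type
  | Leaf (i : ι) : SPN ι
  | Prod (s₁ s₂ : SPN ι) : SPN ι
  | Sum (w : ℝ) (s₁ s₂ : SPN ι) : SPN ι

variable {ι : Type} [DecidableEq ι]

/-- Number of occurrences of leaf index `l` in the expression tree. -/
def SPN.occ (l : ι) : SPN ι → ℕ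
  | .Leaf i => if i = l then 1 else 0
  | .Prod s₁ s₂ => s₁.occ l + s₂.occ l
  | .Sum _ s₁ s₂ => s₁.occ l + s₂.occ l

/-- Evaluation where leaf `l` takes value `t`, other leaves take `val`. -/
def SPN.evalAt (val : ι → ℝ) (l : ι) (t : ℝ) : SPN ι → ℝ
  | .Leaf i => if i = l then t else val i
  | .Prod s₁ s₂ => s₁.evalAt val l t * s₂.evalAt val l t
  | .Sum w s₁ s₂ => w * s₁.evalAt val l t + (1 - w) * s₂.evalAt val l t

/-- Subnetwork terms (with leaf `l` taking value `t`), tagged by whether the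
subnetwork contains leaf `l`. -/
def SPN.tterms (val : ι → ℝ) (l : ι) (t : ℝ) : SPN ι → Multiset (Bool × ℝ)
  | .Leaf i => if i = l then {(true, t)} else {(false, val i)}
  | .Prod s₁ s₂ =>
      (s₁.tterms val l t).bind (fun p =>
        (s₂.tterms val l t).map (fun q => (p.1 || q.1, p.2 * q.2)))
  | .Sum w s₁ s₂ =>
      (s₁.tterms val l t).map (fun p => (p.1, w * p.2)) +
      (s₂.tterms val l t).map (fun q => (q.1, (1 - w) * q.2))


section Helpers
variable {ι : Type} [DecidableEq ι]

lemma Multiset.filter_bind' {α β : Type*} (p : β → Prop) [DecidablePred p]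
    (s : Multiset α) (f : α → Multiset β) :
    (s.bind f).filter p = s.bind (fun a => (f a).filter p) := by
  induction s using Multiset.induction with
  | empty => simp
  | cons a s ih => simp [Multiset.filter_add, ih]

lemma SPN.evalAt_const (val : ι → ℝ) (l : ι) {S : SPN ι} (h : S.occ l = 0)
    (t t' : ℝ) : S.evalAt val l t = S.evalAt val l t' := by
  induction S with
  | Leaf i =>
      simp only [SPN.occ] at h
      by_cases hi : i = l
      · simp [hi] at h
      · simp [SPN.evalAt, hi]
  | Prod s₁ s₂ ih₁ ih₂ =>
      simp only [SPN.occ, Nat.add_eq_zero] at h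
      simp [SPN.evalAt, ih₁ h.1, ih₂ h.2]
  | Sum w s₁ s₂ ih₁ ih₂ =>
      simp only [SPN.occ, Nat.add_eq_zero] at h
      simp [SPN.evalAt, ih₁ h.1, ih₂ h.2]

lemma SPN.tag_false (val : ι → ℝ) (l : ι) (t : ℝ) {S : SPN ι} (h : S.occ l = 0) :
    ∀ p ∈ S.tterms val l t, p.1 = false := by
  induction S with
  | Leaf i =>
      simp only [SPN.occ] at h
      by_cases hi : i = l
      · simp [hi] at h
      · simp [SPN.tterms, hi]
  | Prod s₁ s₂ ih₁ ih₂ =>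
      simp only [SPN.occ, Nat.add_eq_zero] at h
      intro p hp
      simp only [SPN.tterms, Multiset.mem_bind, Multiset.mem_map] at hp
      obtain ⟨q, hq, r, hr, rfl⟩ := hp
      simp [ih₁ h.1 q hq, ih₂ h.2 r hr]
  | Sum w s₁ s₂ ih₁ ih₂ =>
      simp only [SPN.occ, Nat.add_eq_zero] at h
      intro p hp
      simp only [SPN.tterms, Multiset.mem_add, Multiset.mem_map] at hp
      rcases hp with ⟨q, hq, rfl⟩ | ⟨q, hq, rfl⟩
      · exact ih₁ h.1 q hq
      · exact ih₂ h.2 q hq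

lemma SPN.sum_tterms (val : ι → ℝ) (l : ι) (t : ℝ) (S : SPN ι) :
    ((S.tterms val l t).map Prod.snd).sum = S.evalAt val l t := by
  induction S with
  | Leaf i =>
      by_cases hi : i = l <;> simp [SPN.tterms, SPN.evalAt, hi]
  | Prod s₁ s₂ ih₁ ih₂ =>
      simp only [SPN.tterms, SPN.evalAt, Multiset.map_bind, Multiset.sum_bind,
        Multiset.map_map, Function.comp]
      rw [← ih₁, ← ih₂]
      rw [show (fun a => (Multiset.map (fun q : Bool × ℝ => a.2 * q.2)
          (s₂.tterms val l t)).sum) = fun a : Bool × ℝ =>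
          a.2 * ((s₂.tterms val l t).map Prod.snd).sum from ?_]
      · rw [← Multiset.sum_map_mul_right]
      · funext a
        rw [← Multiset.sum_map_mul_left]
  | Sum w s₁ s₂ ih₁ ih₂ =>
      simp only [SPN.tterms, SPN.evalAt, Multiset.map_add, Multiset.sum_add,
        Multiset.map_map, Function.comp]
      rw [← ih₁, ← ih₂, ← Multiset.sum_map_mul_left, ← Multiset.sum_map_mul_left]

lemma sum_map_ite {α : Type*} (P : α → Prop) [DecidablePred P] (g : α → ℝ)
    (s : Multiset α) :
    (s.map (fun a => if P a then g a else 0)).sum = ((s.filter P).map g).sum := by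
  induction s using Multiset.induction with
  | empty => simp
  | cons a s ih => by_cases h : P a <;> simp [Multiset.filter_cons, h, ih]

end Helpers

/-- Proposition 2 (tree, leaf case): if leaf `l` occurs exactly once, then with
`eval` affine in `t` with slope `a`, the sum of the subnetwork terms containing
leaf `l` (evaluated with leaf value `t`) equals `a * t`, i.e. `(∂S/∂S_l) · S_l`. -/
theorem SPN.sum_terms_containing_leaf (val : ι → ℝ) (l : ι) (S : SPN ι)
    (h : S.occ l = 1) :
    ∃ a b : ℝ, (∀ t : ℝ, S.evalAt val l t = a * t + b) ∧
      ∀ t : ℝ,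
        (((S.tterms val l t).filter (fun p => p.1 = true)).map Prod.snd).sum
          = a * t := by
  induction S with
  | Leaf i =>
      simp only [SPN.occ] at h
      by_cases hi : i = l
      · exact ⟨1, 0, fun t => by simp [SPN.evalAt, hi],
          fun t => by simp [SPN.tterms, hi, Multiset.filter_singleton]⟩
      · simp [hi] at h
  | Prod s₁ s₂ ih₁ ih₂ =>
      simp only [SPN.occ] at h
      rcases Nat.add_eq_one_iff.mp h with ⟨h1, h2⟩ | ⟨h1, h2⟩
      · -- occ s₁ = 0, occ s₂ = 1
        obtain ⟨a, b, heval, hsum⟩ := ih₂ h2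
        set E : ℝ := s₁.evalAt val l 0 with hE
        refine ⟨a * E, b * E, fun t => ?_, fun t => ?_⟩
        · simp only [SPN.evalAt]
          rw [SPN.evalAt_const val l h1 t 0, heval t, ← hE]; ring
        · simp only [SPN.tterms]
          rw [Multiset.filter_bind', Multiset.map_bind, Multiset.sum_bind]
          have key : ∀ p ∈ s₁.tterms val l t,
              (Multiset.map Prod.snd
                ((Multiset.map (fun q : Bool × ℝ => (p.1 || q.1, p.2 * q.2))
                  (s₂.tterms val l t)).filter (fun x => x.1 = true))).sum
              = (fun p : Bool × ℝ => p.2 * (a * t)) p := by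
            intro p hp
            have hpf : p.1 = false := SPN.tag_false val l t h1 p hp
            rw [Multiset.filter_map, Multiset.map_map]
            have hfe : ((s₂.tterms val l t).filter
                ((fun x : Bool × ℝ => x.1 = true) ∘
                  fun q : Bool × ℝ => (p.1 || q.1, p.2 * q.2)))
                = (s₂.tterms val l t).filter (fun q => q.1 = true) := by
              apply Multiset.filter_congr; intro q _; simp [Function.comp, hpf]
            rw [hfe]
            have : (Multiset.map
                (Prod.snd ∘ fun q : Bool × ℝ => (p.1 || q.1, p.2 * q.2))
                ((s₂.tterms val l t).filter (fun q => q.1 = true))).sum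
                = p.2 * (Multiset.map Prod.snd
                    ((s₂.tterms val l t).filter (fun q => q.1 = true))).sum := by
              rw [← Multiset.sum_map_mul_left]; rfl
            rw [this, hsum t]
          rw [Multiset.map_congr rfl key]
          have : (Multiset.map (fun p : Bool × ℝ => p.2 * (a * t))
              (s₁.tterms val l t)).sum
              = (Multiset.map Prod.snd (s₁.tterms val l t)).sum * (a * t) := by
            rw [← Multiset.sum_map_mul_right]
          rw [this, SPN.sum_tterms, SPN.evalAt_const val l h1 t 0, ← hE]; ring
      · -- occ s₁ = 1, occ s₂ = 0
        obtain ⟨a, b, heval, hsum⟩ := ih₁ h1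
        set E : ℝ := s₂.evalAt val l 0 with hE
        refine ⟨a * E, b * E, fun t => ?_, fun t => ?_⟩
        · simp only [SPN.evalAt]
          rw [SPN.evalAt_const val l h2 t 0, heval t, ← hE]; ring
        · simp only [SPN.tterms]
          rw [Multiset.filter_bind', Multiset.map_bind, Multiset.sum_bind]
          have key : ∀ p ∈ s₁.tterms val l t,
              (Multiset.map Prod.snd
                ((Multiset.map (fun q : Bool × ℝ => (p.1 || q.1, p.2 * q.2))
                  (s₂.tterms val l t)).filter (fun x => x.1 = true))).sum
              = (fun p : Bool × ℝ => if p.1 = true then p.2 * E else 0) p := by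
            intro p hp
            rw [Multiset.filter_map, Multiset.map_map]
            by_cases hp1 : p.1 = true
            · have hfe : ((s₂.tterms val l t).filter
                  ((fun x : Bool × ℝ => x.1 = true) ∘
                    fun q : Bool × ℝ => (p.1 || q.1, p.2 * q.2)))
                  = s₂.tterms val l t :=
                Multiset.filter_eq_self.mpr (fun q _ => by simp [hp1])
              rw [hfe]
              have : (Multiset.map
                  (Prod.snd ∘ fun q : Bool × ℝ => (p.1 || q.1, p.2 * q.2))
                  (s₂.tterms val l t)).sum
                  = p.2 * (Multiset.map Prod.snd (s₂.tterms val l t)).sum := by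
                rw [← Multiset.sum_map_mul_left]; rfl
              rw [this, SPN.sum_tterms, SPN.evalAt_const val l h2 t 0, ← hE]
              simp [hp1]
            · have hpf : p.1 = false := by simpa using hp1
              have hfe : ((s₂.tterms val l t).filter
                  ((fun x : Bool × ℝ => x.1 = true) ∘
                    fun q : Bool × ℝ => (p.1 || q.1, p.2 * q.2))) = 0 := by
                rw [Multiset.filter_eq_nil]
                intro q hq
                simp [Function.comp, hpf, SPN.tag_false val l t h2 q hq]
              rw [hfe]
              simp [hpf]
          rw [Multiset.map_congr rfl key]
          rw [sum_map_ite (fun p : Bool × ℝ => p.1 = true)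
            (fun p : Bool × ℝ => p.2 * E) (s₁.tterms val l t)]
          have : (Multiset.map (fun p : Bool × ℝ => p.2 * E)
              ((s₁.tterms val l t).filter (fun p => p.1 = true))).sum
              = (Multiset.map Prod.snd
                  ((s₁.tterms val l t).filter (fun p => p.1 = true))).sum * E := by
            rw [← Multiset.sum_map_mul_right]
          rw [this, hsum t]; ring
  | Sum w s₁ s₂ ih₁ ih₂ =>
      simp only [SPN.occ] at h
      rcases Nat.add_eq_one_iff.mp h with ⟨h1, h2⟩ | ⟨h1, h2⟩
      · obtain ⟨a, b, heval, hsum⟩ := ih₂ h2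
        refine ⟨(1 - w) * a, (1 - w) * b + w * s₁.evalAt val l 0,
          fun t => ?_, fun t => ?_⟩
        · simp only [SPN.evalAt]
          rw [SPN.evalAt_const val l h1 t 0, heval t]; ring
        · simp only [SPN.tterms]
          rw [Multiset.filter_add, Multiset.map_add, Multiset.sum_add]
          have hz : ((Multiset.map (fun p : Bool × ℝ => (p.1, w * p.2))
              (s₁.tterms val l t)).filter (fun p => p.1 = true)) = 0 := by
            rw [Multiset.filter_eq_nil]
            intro p hp
            simp only [Multiset.mem_map] at hp
            obtain ⟨q, hq, rfl⟩ := hp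
            simp [SPN.tag_false val l t h1 q hq]
          rw [hz]
          rw [Multiset.filter_map, Multiset.map_map]
          have : ((s₂.tterms val l t).filter
              ((fun p : Bool × ℝ => p.1 = true) ∘ fun q : Bool × ℝ => (q.1, (1 - w) * q.2)))
              = (s₂.tterms val l t).filter (fun p => p.1 = true) := by
            apply Multiset.filter_congr; intro p _; simp [Function.comp]
          rw [this]
          have : (Multiset.map (Prod.snd ∘ fun q : Bool × ℝ => (q.1, (1 - w) * q.2))
              ((s₂.tterms val l t).filter (fun p => p.1 = true))).sum
              = (1 - w) * (Multiset.map Prod.snd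
                  ((s₂.tterms val l t).filter (fun p => p.1 = true))).sum := by
            rw [← Multiset.sum_map_mul_left]; rfl
          rw [Multiset.map_zero, Multiset.sum_zero, zero_add, this, hsum t]; ring
      · obtain ⟨a, b, heval, hsum⟩ := ih₁ h1
        refine ⟨w * a, w * b + (1 - w) * s₂.evalAt val l 0,
          fun t => ?_, fun t => ?_⟩
        · simp only [SPN.evalAt]
          rw [SPN.evalAt_const val l h2 t 0, heval t]; ring
        · simp only [SPN.tterms]
          rw [Multiset.filter_add, Multiset.map_add, Multiset.sum_add]
          have hz : ((Multiset.map (fun q : Bool × ℝ => (q.1, (1 - w) * q.2))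
              (s₂.tterms val l t)).filter (fun p => p.1 = true)) = 0 := by
            rw [Multiset.filter_eq_nil]
            intro p hp
            simp only [Multiset.mem_map] at hp
            obtain ⟨q, hq, rfl⟩ := hp
            simp [SPN.tag_false val l t h2 q hq]
          rw [hz]
          rw [Multiset.filter_map, Multiset.map_map]
          have : ((s₁.tterms val l t).filter
              ((fun p : Bool × ℝ => p.1 = true) ∘ fun q : Bool × ℝ => (q.1, w * q.2)))
              = (s₁.tterms val l t).filter (fun p => p.1 = true) := by
            apply Multiset.filter_congr; intro p _; simp [Function.comp]
          rw [this]
          have : (Multiset.map (Prod.snd ∘ fun q : Bool × ℝ => (q.1, w * q.2))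
              ((s₁.tterms val l t).filter (fun p => p.1 = true))).sum
              = w * (Multiset.map Prod.snd
                  ((s₁.tterms val l t).filter (fun p => p.1 = true))).sum := by
            rw [← Multiset.sum_map_mul_left]; rfl
          rw [Multiset.map_zero, Multiset.sum_zero, add_zero, this, hsum t]; ring
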